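/- If n is even and n ≢ 0 (mod 3), then the cycle C_n admits a J-colouring and its J-colouring number equals 2. -/

import Mathlib

open SimpleGraph

/-- A colouring is proper. -/
def ProperColoring {V : Type*} {k : ℕ} (G : SimpleGraph V) (c : V → Fin k) : Prop :=
  ∀ u v, G.Adj u v → c u ≠ c v

/-- Vertex `v` belongs to a rainbow neighbourhood: its closed neighbourhood
contains every colour. -/
def RainbowAt {V : Type*} {k : ℕ} (G : SimpleGraph V) (c : V → Fin k) (v : V) : Prop :=
  ∀ i : Fin k, ∃ u, (u = v ∨ G.Adj v u) ∧ c u = i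

/-- A J-colouring: a proper colouring in which every vertex belongs to a
rainbow neighbourhood. -/
def IsJColoring {V : Type*} {k : ℕ} (G : SimpleGraph V) (c : V → Fin k) : Prop :=
  ProperColoring G c ∧ ∀ v, RainbowAt G c v

/-!
A proper 2-colouring of an even cycle is a J-colouring, because every vertex sees the other
colour on a neighbour. Conversely, in a J-colouring with at least three colours, a colour `i`
avoided by two consecutive vertices `v + 1`, `v + 2` must occur in both of their closed
neighbourhoods, hence at `v` and at `v + 3`. So the colouring is 3-periodic; as 3 is coprime
to `n` it is constant, contradicting properness.
-/

open scoped Fin.CommRing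

section JColoring

variable {V : Type*} {G : SimpleGraph V}

theorem isJColoring_of_properColoring_fin_two {c : V → Fin 2} (hc : ProperColoring G c)
    (hG : ∀ v, ∃ u, G.Adj v u) : IsJColoring G c := by
  refine ⟨hc, fun v i => ?_⟩
  by_cases hi : c v = i
  · exact ⟨v, .inl rfl, hi⟩
  · obtain ⟨u, hu⟩ := hG v
    have := hc v u hu
    exact ⟨u, .inr hu, by grind⟩

theorem exists_isJColoring_fin_two_of_colorable (hG : G.Colorable 2)
    (hadj : ∀ v, ∃ u, G.Adj v u) : ∃ c : V → Fin 2, IsJColoring G c :=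
  ⟨hG.some, isJColoring_of_properColoring_fin_two (fun _ _ h => hG.some.valid h) hadj⟩

end JColoring

theorem Function.Periodic.fin_one_of_coprime {α : Type*} {n a : ℕ} {f : Fin (n + 2) → α}
    (hf : Function.Periodic f (a : Fin (n + 2))) (ha : a.Coprime (n + 2)) :
    Function.Periodic f 1 := by
  obtain ⟨t, -, ht⟩ := Nat.exists_mul_mod_eq_one_of_coprime ha (by omega)
  have hinv : ((t * a : ℕ) : Fin (n + 2)) = 1 :=
    Fin.ext (by rw [Fin.val_natCast, mul_comm, ht, Fin.val_one])
  push_cast at hinv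
  simpa [hinv] using hf.nat_mul t

section CycleGraph

variable {n : ℕ}

theorem cycleGraph_adj_add_one (v : Fin (n + 2)) : (cycleGraph (n + 2)).Adj v (v + 1) :=
  cycleGraph_adj.2 (.inr (add_sub_cancel_left v 1))

theorem cycleGraph_eq_or_eq_of_adj_add_one {v u : Fin (n + 2)}
    (h : (cycleGraph (n + 2)).Adj (v + 1) u) : u = v ∨ u = v + 2 := by
  have : u ∈ (cycleGraph (n + 2)).neighborSet (v + 1) := h
  rwa [cycleGraph_neighborSet, add_sub_cancel_right, add_assoc, one_add_one_eq_two] at this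

theorem RainbowAt.cycleGraph_add_one {k : ℕ} {c : Fin (n + 2) → Fin k} {v : Fin (n + 2)}
    (h : RainbowAt (cycleGraph (n + 2)) c (v + 1)) (i : Fin k) :
    c v = i ∨ c (v + 1) = i ∨ c (v + 2) = i := by
  obtain ⟨u, rfl | hu, rfl⟩ := h i
  · simp
  · rcases cycleGraph_eq_or_eq_of_adj_add_one hu with rfl | rfl <;> simp

theorem IsJColoring.cycleGraph_periodic_three {k : ℕ} (hk : 2 < k) {c : Fin (n + 2) → Fin k}
    (hc : IsJColoring (cycleGraph (n + 2)) c) : Function.Periodic c 3 := by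
  intro v
  obtain ⟨i, -, hi⟩ := Finset.exists_mem_notMem_of_card_lt_card
    (s := {c (v + 1), c (v + 2)}) (t := Finset.univ) (Finset.card_le_two.trans_lt (by simpa))
  have hv := (hc.2 (v + 1)).cycleGraph_add_one i
  have hv3 := (hc.2 (v + 1 + 1)).cycleGraph_add_one i
  rw [show v + 1 + 1 = v + 2 by ring, show v + 1 + 2 = v + 3 by ring] at hv3
  simp only [Finset.mem_insert, Finset.mem_singleton] at hi
  grind

end CycleGraph

theorem J_number_cycle_two_general (n : ℕ) (h2 : n % 2 = 0) (h3 : n % 3 ≠ 0) :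
    (∃ c : Fin n → Fin 2, IsJColoring (cycleGraph n) c) ∧
      ∀ k : ℕ, 2 < k → ¬ ∃ c : Fin n → Fin k, IsJColoring (cycleGraph n) c := by
  obtain ⟨n, rfl⟩ : ∃ m, n = m + 2 := ⟨n - 2, by omega⟩
  refine ⟨exists_isJColoring_fin_two_of_colorable ?_ fun v => ⟨v + 1, cycleGraph_adj_add_one v⟩,
    ?_⟩
  · simpa using (cycleGraph.bicoloring_of_even _ (Nat.even_iff.2 h2)).colorable
  rintro k hk ⟨c, hc⟩
  have hcop : Nat.Coprime 3 (n + 2) := Nat.prime_three.coprime_iff_not_dvd.2 (by omega)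
  have hper : Function.Periodic c 1 :=
    Function.Periodic.fin_one_of_coprime (by simpa using hc.cycleGraph_periodic_three hk) hcop
  exact hc.1 0 (0 + 1) (cycleGraph_adj_add_one 0) (hper 0).symm

theorem J_number_cycle_two (n : ℕ) (hn : 3 ≤ n) (h2 : n % 2 = 0) (h3 : n % 3 ≠ 0) :
    (∃ c : Fin n → Fin 2, IsJColoring (cycleGraph n) c) ∧
      ∀ k : ℕ, 2 < k → ¬ ∃ c : Fin n → Fin k, IsJColoring (cycleGraph n) c :=
  J_number_cycle_two_general n h2 h3
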